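/- Let F: R^d → R be Lipschitz continuous with constant L_0, and for η > 0 define F_η(θ) = E_v[F(θ + η v)] with gradient ∇F_η(θ) = E_v[((F(θ + η v) − F(θ))/η) v], where v ~ N(0, I_d). Then for any η_1, η_2 > 0 and any θ ∈ R^d, ||∇F_{η_2}(θ) − ∇F_{η_1}(θ)|| ≤ 2 L_0 d |η_2 − η_1| / η_2. -/

import Mathlib

/-!
Pointwise in `v`, the two integrands differ by `(q₂ - q₁) • v`, where `qᵢ` is the difference
quotient of `F` at `θ` in direction `v` with step `ηᵢ`. Splitting
`q₂ - q₁ = (F (θ + η₂ v) - F (θ + η₁ v)) / η₂ - q₁ (η₂ - η₁) / η₂` and using the Lipschitz bound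
on both terms gives `|q₂ - q₁| ≤ 2 L₀ |η₂ - η₁| ‖v‖ / η₂`. Integrating against the Gaussian
leaves the second moment `E ‖v‖² = d`, which is the sum of the variances of the coordinates.
-/

open MeasureTheory ProbabilityTheory

noncomputable def stdGaussian (d : ℕ) : Measure (EuclideanSpace ℝ (Fin d)) :=
  (Measure.pi fun _ => gaussianReal 0 1).map (MeasurableEquiv.toLp 2 (Fin d → ℝ))

open scoped NNReal

lemma integral_sq_gaussianReal (v : ℝ≥0) : ∫ x, x ^ 2 ∂gaussianReal 0 v = v :=
  (variance_of_integral_eq_zero aemeasurable_id integral_id_gaussianReal).symm.trans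
    variance_id_gaussianReal

lemma integral_norm_sq_stdGaussian_euclideanSpace (ι : Type*) [Fintype ι] :
    ∫ x, ‖x‖ ^ 2 ∂ProbabilityTheory.stdGaussian (EuclideanSpace ℝ ι) = Fintype.card ι := by
  rw [← map_pi_eq_stdGaussian, integral_map (by fun_prop) (by fun_prop)]
  simp_rw [EuclideanSpace.real_norm_sq_eq]
  have hsq : Integrable (fun x : ℝ => x ^ 2) (gaussianReal 0 1) :=
    (memLp_id_gaussianReal 2).integrable_sq
  rw [integral_finsetSum _ fun i _ => integrable_comp_eval (i := i) hsq]
  simp [fun i => integral_comp_eval (μ := fun _ : ι => gaussianReal 0 1) (i := i)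
    hsq.aestronglyMeasurable, integral_sq_gaussianReal]

lemma integral_norm_sq_stdGaussian (E : Type*) [NormedAddCommGroup E] [InnerProductSpace ℝ E]
    [FiniteDimensional ℝ E] [MeasurableSpace E] [BorelSpace E] :
    ∫ x, ‖x‖ ^ 2 ∂ProbabilityTheory.stdGaussian E = Module.finrank ℝ E := by
  let e := (stdOrthonormalBasis ℝ E).repr
  calc ∫ x, ‖x‖ ^ 2 ∂ProbabilityTheory.stdGaussian E
      = ∫ x, ‖e x‖ ^ 2 ∂ProbabilityTheory.stdGaussian E := by
        simp_rw [LinearIsometryEquiv.norm_map]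
    _ = ∫ y, ‖y‖ ^ 2 ∂(ProbabilityTheory.stdGaussian E).map e := by
        rw [integral_map (by fun_prop) (by fun_prop)]
    _ = Module.finrank ℝ E := by
        rw [stdGaussian_map, integral_norm_sq_stdGaussian_euclideanSpace, Fintype.card_fin]

lemma stdGaussian_eq_stdGaussian_euclideanSpace (d : ℕ) :
    stdGaussian d = ProbabilityTheory.stdGaussian (EuclideanSpace ℝ (Fin d)) :=
  map_pi_eq_stdGaussian

section SmoothedGradient

variable {E : Type*} [NormedAddCommGroup E] [NormedSpace ℝ E] {F : E → ℝ} {L η η₁ η₂ : ℝ}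

lemma abs_diffQuot_le (hF : ∀ x y, |F x - F y| ≤ L * ‖x - y‖) (hη : 0 < η) (θ v : E) :
    |(F (θ + η • v) - F θ) / η| ≤ L * ‖v‖ := by
  rw [abs_div, abs_of_pos hη, div_le_iff₀ hη]
  simpa [norm_smul, abs_of_pos hη, mul_comm, mul_left_comm] using hF (θ + η • v) θ

lemma abs_diffQuot_sub_diffQuot_le (hF : ∀ x y, |F x - F y| ≤ L * ‖x - y‖) (hη₁ : 0 < η₁)
    (hη₂ : 0 < η₂) (θ v : E) :
    |(F (θ + η₂ • v) - F θ) / η₂ - (F (θ + η₁ • v) - F θ) / η₁|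
      ≤ 2 * L * |η₂ - η₁| / η₂ * ‖v‖ := by
  set q := (F (θ + η₁ • v) - F θ) / η₁
  have hstep : |F (θ + η₂ • v) - F (θ + η₁ • v)| ≤ L * (|η₂ - η₁| * ‖v‖) := by
    simpa [← sub_smul, norm_smul] using hF (θ + η₂ • v) (θ + η₁ • v)
  have hsplit : (F (θ + η₂ • v) - F θ) / η₂ - q
      = (F (θ + η₂ • v) - F (θ + η₁ • v)) / η₂ - q * (η₂ - η₁) / η₂ := by
    simp only [q]
    field_simp
    ring
  calc |(F (θ + η₂ • v) - F θ) / η₂ - q|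
      ≤ |F (θ + η₂ • v) - F (θ + η₁ • v)| / η₂ + |q| * |η₂ - η₁| / η₂ := by
        rw [hsplit]
        refine (abs_sub _ _).trans_eq ?_
        rw [abs_div, abs_div, abs_mul, abs_of_pos hη₂]
    _ ≤ L * (|η₂ - η₁| * ‖v‖) / η₂ + L * ‖v‖ * |η₂ - η₁| / η₂ := by
        gcongr
        exact abs_diffQuot_le hF hη₁ θ v
    _ = 2 * L * |η₂ - η₁| / η₂ * ‖v‖ := by ring

variable [MeasurableSpace E] [BorelSpace E] [SecondCountableTopology E] {μ : Measure E}

lemma integrable_diffQuot_smul (hF : ∀ x y, |F x - F y| ≤ L * ‖x - y‖) (hη : 0 < η) (θ : E)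
    (hμ : Integrable (fun v => ‖v‖ ^ 2) μ) :
    Integrable (fun v => ((F (θ + η • v) - F θ) / η) • v) μ := by
  have hFc : Continuous F :=
    (LipschitzWith.of_dist_le' (K := L) (by simpa [Real.dist_eq, dist_eq_norm] using hF)).continuous
  refine (hμ.const_mul L).mono' (by fun_prop) (Filter.Eventually.of_forall fun v => ?_)
  rw [norm_smul, Real.norm_eq_abs, sq, ← mul_assoc]
  exact mul_le_mul_of_nonneg_right (abs_diffQuot_le hF hη θ v) (norm_nonneg v)

lemma norm_integral_diffQuot_smul_sub_le (hF : ∀ x y, |F x - F y| ≤ L * ‖x - y‖) (hη₁ : 0 < η₁)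
    (hη₂ : 0 < η₂) (θ : E) (hμ : Integrable (fun v => ‖v‖ ^ 2) μ) :
    ‖(∫ v, ((F (θ + η₂ • v) - F θ) / η₂) • v ∂μ) - ∫ v, ((F (θ + η₁ • v) - F θ) / η₁) • v ∂μ‖
      ≤ 2 * L * |η₂ - η₁| / η₂ * ∫ v, ‖v‖ ^ 2 ∂μ := by
  rw [← integral_sub (integrable_diffQuot_smul hF hη₂ θ hμ) (integrable_diffQuot_smul hF hη₁ θ hμ),
    ← integral_const_mul]
  refine norm_integral_le_of_norm_le (hμ.const_mul _) (Filter.Eventually.of_forall fun v => ?_)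
  rw [← sub_smul, norm_smul, Real.norm_eq_abs, sq, ← mul_assoc]
  exact mul_le_mul_of_nonneg_right (abs_diffQuot_sub_diffQuot_le hF hη₁ hη₂ θ v) (norm_nonneg v)

end SmoothedGradient

/-- For L₀-Lipschitz F, with ∇F_η(θ) = E_v[((F(θ+ηv) − F(θ))/η) v], for any η₁, η₂ > 0:
‖∇F_{η₂}(θ) − ∇F_{η₁}(θ)‖ ≤ 2 L₀ d |η₂ − η₁| / η₂. -/
theorem stmt_5 (d : ℕ) (F : EuclideanSpace ℝ (Fin d) → ℝ) (L₀ η₁ η₂ : ℝ)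
    (hLip : ∀ x y, |F x - F y| ≤ L₀ * ‖x - y‖) (hη₁ : 0 < η₁) (hη₂ : 0 < η₂)
    (θ : EuclideanSpace ℝ (Fin d)) :
    ‖(∫ v, ((F (θ + η₂ • v) - F θ) / η₂) • v ∂(stdGaussian d))
      - (∫ v, ((F (θ + η₁ • v) - F θ) / η₁) • v ∂(stdGaussian d))‖
      ≤ 2 * L₀ * d * |η₂ - η₁| / η₂ := by
  have hμ : Integrable (fun v => ‖v‖ ^ 2) (stdGaussian d) := by
    rw [stdGaussian_eq_stdGaussian_euclideanSpace]
    exact IsGaussian.memLp_two_id.integrable_norm_pow two_ne_zero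
  have hmoment : ∫ v, ‖v‖ ^ 2 ∂(stdGaussian d) = d := by
    rw [stdGaussian_eq_stdGaussian_euclideanSpace, integral_norm_sq_stdGaussian,
      finrank_euclideanSpace_fin]
  calc _ ≤ 2 * L₀ * |η₂ - η₁| / η₂ * ∫ v, ‖v‖ ^ 2 ∂(stdGaussian d) :=
        norm_integral_diffQuot_smul_sub_le hLip hη₁ hη₂ θ hμ
    _ = 2 * L₀ * d * |η₂ - η₁| / η₂ := by rw [hmoment]; ring
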